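/- arXiv:1710.10984 — 4 statements merged into one kernel-verified Lean document; each statement's English description precedes it below -/
import Mathlib

section
/- Let $(c_\nu)_{\nu}$ be a family of nonnegative reals indexed by finitely supported multi-indices $\nu \in \mathbb{N}^{(\mathbb{N})}$, and let $(b_j)_{j\ge 1}$ be nonnegative reals. Suppose $c_0 \le C$ and for every $\nu \ne 0$ we have $c_\nu \le \sum_{j : \nu_j \ge 1} \nu_j\, b_j\, c_{\nu - e_j}$. Then for every finitely supported multi-index $\nu$, $c_\nu \le |\nu|!\, b^{\nu}\, C$, where $|\nu| = \sum_j \nu_j$ and $b^{\nu} = \prod_j b_j^{\nu_j}$. -/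
open Finsupp

/-- Abstract induction underlying the regularity bound
`‖∇ ∂^ν u‖ ≤ |ν|! b^ν ‖κ‖/a_min` in the uniform case. -/
theorem stmt_0 (c : (ℕ →₀ ℕ) → ℝ) (b : ℕ → ℝ) (C : ℝ)
    (hc : ∀ ν, 0 ≤ c ν) (hb : ∀ j, 0 ≤ b j)
    (h0 : c 0 ≤ C)
    (hrec : ∀ ν : ℕ →₀ ℕ, ν ≠ 0 →
      c ν ≤ ∑ j ∈ ν.support, (ν j : ℝ) * b j * c (ν - Finsupp.single j 1)) :
    ∀ ν : ℕ →₀ ℕ,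
      c ν ≤ (Nat.factorial (ν.sum fun _ n => n) : ℝ) *
        (ν.prod fun j n => (b j) ^ n) * C := by
  have hC : 0 ≤ C := le_trans (hc 0) h0
  suffices H : ∀ n (ν : ℕ →₀ ℕ), (ν.sum fun _ n => n) = n →
      c ν ≤ (Nat.factorial n : ℝ) * (ν.prod fun j n => (b j) ^ n) * C by
    intro ν; exact H _ ν rfl
  intro n
  induction n using Nat.strong_induction_on with
  | _ n IH =>
    intro ν hν
    by_cases hν0 : ν = 0
    · subst hν0
      simp only [Finsupp.sum_zero_index] at hν
      subst hν
      simpa using h0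
    · -- n ≥ 1
      have hn1 : 1 ≤ n := by
        obtain ⟨j, hj⟩ : ∃ j, ν j ≠ 0 := by
          by_contra h
          push_neg at h
          exact hν0 (Finsupp.ext h)
        have hjs : j ∈ ν.support := Finsupp.mem_support_iff.mpr hj
        have : ν j ≤ ν.sum fun _ n => n :=
          Finset.single_le_sum (f := fun j => ν j) (fun _ _ => Nat.zero_le _) hjs
        omega
      refine (hrec ν hν0).trans ?_
      set P : ℝ := ν.prod fun j n => (b j) ^ n with hP
      have key : ∀ j ∈ ν.support,
          (ν j : ℝ) * b j * c (ν - Finsupp.single j 1)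
            ≤ (ν j : ℝ) * ((Nat.factorial (n - 1) : ℝ) * P * C) := by
        intro j hj
        have hjne : ν j ≠ 0 := Finsupp.mem_support_iff.mp hj
        have hle : Finsupp.single j 1 ≤ ν :=
          Finsupp.single_le_iff.mpr (Nat.one_le_iff_ne_zero.mpr hjne)
        have hdecomp : (ν - Finsupp.single j 1) + Finsupp.single j 1 = ν :=
          tsub_add_cancel_of_le hle
        -- sum of ν - e_j
        have hsum : ((ν - Finsupp.single j 1).sum fun _ n => n) = n - 1 := by
          have h1 : (((ν - Finsupp.single j 1) + Finsupp.single j 1).sum fun _ n => n)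
              = ((ν - Finsupp.single j 1).sum fun _ n => n)
                + ((Finsupp.single j 1).sum fun _ n => n) :=
            Finsupp.sum_add_index' (fun _ => rfl) (fun _ _ _ => rfl)
          rw [hdecomp, hν] at h1
          have h2 : ((Finsupp.single j 1).sum fun _ n => n) = 1 :=
            Finsupp.sum_single_index rfl
          omega
        -- product identity
        have hprod : ((ν - Finsupp.single j 1).prod fun j n => (b j) ^ n) * b j = P := by
          have h1 : (((ν - Finsupp.single j 1) + Finsupp.single j 1).prod fun j n => (b j) ^ n)
              = ((ν - Finsupp.single j 1).prod fun j n => (b j) ^ n)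
                * ((Finsupp.single j 1).prod fun j n => (b j) ^ n) :=
            Finsupp.prod_add_index' (fun a => pow_zero _) (fun a m k => pow_add _ _ _)
          rw [hdecomp] at h1
          have h2 : ((Finsupp.single j 1).prod fun j n => (b j) ^ n) = b j := by
            simp
          rw [hP, h1, h2]
        have hIH := IH (n - 1) (by omega) (ν - Finsupp.single j 1) hsum
        have hbj : 0 ≤ b j := hb j
        have hνj : (0 : ℝ) ≤ (ν j : ℝ) := Nat.cast_nonneg _
        calc (ν j : ℝ) * b j * c (ν - Finsupp.single j 1)
            ≤ (ν j : ℝ) * b j * ((Nat.factorial (n - 1) : ℝ)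
                * ((ν - Finsupp.single j 1).prod fun j n => (b j) ^ n) * C) := by
              apply mul_le_mul_of_nonneg_left hIH (by positivity)
          _ = (ν j : ℝ) * ((Nat.factorial (n - 1) : ℝ)
                * (((ν - Finsupp.single j 1).prod fun j n => (b j) ^ n) * b j) * C) := by
              ring
          _ = (ν j : ℝ) * ((Nat.factorial (n - 1) : ℝ) * P * C) := by rw [hprod]
      refine (Finset.sum_le_sum key).trans ?_
      rw [← Finset.sum_mul]
      have hcast : (∑ j ∈ ν.support, (ν j : ℝ)) = (n : ℝ) := by
        rw [← Nat.cast_sum]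
        exact_mod_cast congrArg (Nat.cast : ℕ → ℝ) hν
      rw [hcast]
      have hfact : (n : ℝ) * (Nat.factorial (n - 1) : ℝ) = (Nat.factorial n : ℝ) := by
        rw [← Nat.cast_mul]
        congr 1
        exact Nat.succ_pred_eq_of_pos hn1 ▸ Nat.mul_factorial_pred (by omega)
      have heq : (n : ℝ) * ((Nat.factorial (n - 1) : ℝ) * P * C)
          = (Nat.factorial n : ℝ) * P * C := by rw [← hfact]; ring
      exact le_of_eq heq
end

section
/- Let $(\alpha_j)_{j\ge 1}$ be nonnegative reals and $0 < k < 1$ with $\sum_{j=1}^{\infty} \alpha_j^k < \infty$. Then the sums $S_s := \sum_{u \subseteq \{1,\dots,s\}} \left(|u|! \prod_{j\in u}\alpha_j\right)^k$ are bounded uniformly in $s$; that is, $\sup_{s\ge 1} S_s \le \sum_{\ell=0}^{\infty} (\ell!)^{k-1} A^{\ell} < \infty$, where $A = \sum_{j=1}^{\infty} \alpha_j^k$. -/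
/-!
Grouping the subsets `u` by their size `ℓ`, the `ℓ`-th group is `(ℓ!)^k e_ℓ(α^k)`, where `e_ℓ` is
the elementary symmetric polynomial. By the multinomial theorem `ℓ! e_ℓ(β) ≤ (∑ β)^ℓ` for `β ≥ 0`,
so the group is at most `(ℓ!)^(k-1) A^ℓ`. These terms are summable by the ratio test, the ratio
`(ℓ+1)^(k-1) A` tending to `0` because `k < 1`.
-/

open Finset
open scoped Nat

section Indicator

variable {ι : Type*} [DecidableEq ι] {t u : Finset ι}

lemma sum_boole_mem_of_subset (h : u ⊆ t) :
    ∑ i ∈ t, (if i ∈ u then 1 else 0 : ℕ) = #u := by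
  rw [sum_boole, filter_mem_eq_inter, inter_eq_right.mpr h, Nat.cast_id]

lemma multinomial_boole_mem (h : u ⊆ t) :
    Nat.multinomial t (fun i => if i ∈ u then 1 else 0) = (#u)! := by
  have hspec := Nat.multinomial_spec t (fun i => if i ∈ u then 1 else 0)
  rwa [prod_eq_one fun i _ => by split_ifs <;> rfl, one_mul,
    sum_boole_mem_of_subset h] at hspec

end Indicator

lemma factorial_mul_sum_powersetCard_prod_le_pow {R ι : Type*} [CommSemiring R] [PartialOrder R]
    [IsOrderedRing R] (t : Finset ι) {β : ι → R} (hβ : ∀ i ∈ t, 0 ≤ β i)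
    (ℓ : ℕ) : (ℓ ! : R) * ∑ u ∈ t.powersetCard ℓ, ∏ i ∈ u, β i ≤ (∑ i ∈ t, β i) ^ ℓ := by
  classical
  -- `u` of size `ℓ` is the multinomial term with exponent vector `1_u`, of coefficient `ℓ!`.
  set ind : Finset ι → ι → ℕ := fun u i => if i ∈ u then 1 else 0
  have ind_injective : Function.Injective ind := fun u v huv => by
    ext i
    have := congrFun huv i
    simp only [ind] at this
    split_ifs at this <;> simp_all
  have term_eq : ∀ u ∈ t.powersetCard ℓ,
      (ℓ ! : R) * ∏ i ∈ u, β i = Nat.multinomial t (ind u) * ∏ i ∈ t, β i ^ ind u i := by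
    intro u hu
    obtain ⟨hut, rfl⟩ := mem_powersetCard.mp hu
    rw [multinomial_boole_mem hut]
    simp only [ind, pow_ite, pow_one, pow_zero, prod_ite_mem, inter_eq_right.mpr hut]
  have image_subset : (t.powersetCard ℓ).image ind ⊆ piAntidiag t ℓ := by
    simp only [subset_iff, mem_image, mem_powersetCard, mem_piAntidiag]
    rintro _ ⟨u, ⟨hut, rfl⟩, rfl⟩
    refine ⟨sum_boole_mem_of_subset hut, fun i hi => hut ?_⟩
    simpa [ind] using hi
  rw [mul_sum, sum_congr rfl term_eq, sum_pow_eq_sum_piAntidiag]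
  calc _ = ∑ f ∈ (t.powersetCard ℓ).image ind, (Nat.multinomial t f : R) * ∏ i ∈ t, β i ^ f i :=
        (sum_image ind_injective.injOn).symm
    _ ≤ _ := sum_le_sum_of_subset_of_nonneg image_subset fun f _ _ =>
        mul_nonneg (Nat.cast_nonneg _) (prod_nonneg fun i hi => pow_nonneg (hβ i hi) _)

lemma sum_powerset_factorial_mul_prod_rpow_le {ι : Type*} (t : Finset ι)
    {α : ι → ℝ} (hα : ∀ j ∈ t, 0 ≤ α j) (k : ℝ) :
    ∑ u ∈ t.powerset, ((#u)! * ∏ j ∈ u, α j) ^ k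
      ≤ ∑ ℓ ∈ range (#t + 1), (ℓ ! : ℝ) ^ (k - 1) * (∑ j ∈ t, α j ^ k) ^ ℓ := by
  rw [sum_powerset]
  refine sum_le_sum fun ℓ _ => ?_
  have hℓ : (0 : ℝ) < ℓ ! := mod_cast ℓ.factorial_pos
  calc ∑ u ∈ t.powersetCard ℓ, ((#u)! * ∏ j ∈ u, α j) ^ k
      = (ℓ ! : ℝ) ^ (k - 1) * (ℓ ! * ∑ u ∈ t.powersetCard ℓ, ∏ j ∈ u, α j ^ k) := by
        rw [← mul_assoc, ← Real.rpow_add_one hℓ.ne', sub_add_cancel, mul_sum]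
        refine sum_congr rfl fun u hu => ?_
        obtain ⟨hut, rfl⟩ := mem_powersetCard.mp hu
        rw [Real.mul_rpow hℓ.le (prod_nonneg fun j hj => hα j (hut hj)),
          Real.finsetProd_rpow u _ fun j hj => hα j (hut hj)]
    _ ≤ (ℓ ! : ℝ) ^ (k - 1) * (∑ j ∈ t, α j ^ k) ^ ℓ := by
        gcongr
        exact factorial_mul_sum_powersetCard_prod_le_pow t
          (fun j hj => Real.rpow_nonneg (hα j hj) k) ℓ

lemma norm_factorial_rpow_mul_pow_succ (k A : ℝ) (n : ℕ) :
    ‖((n + 1)! : ℝ) ^ (k - 1) * A ^ (n + 1)‖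
      = ((n : ℝ) + 1) ^ (k - 1) * |A| * ‖(n ! : ℝ) ^ (k - 1) * A ^ n‖ := by
  have hn : (0 : ℝ) ≤ n ! := Nat.cast_nonneg _
  rw [Nat.factorial_succ, Nat.cast_mul, Nat.cast_succ, Real.mul_rpow (by positivity) hn]
  simp only [norm_mul, norm_pow, Real.norm_eq_abs, pow_succ, abs_of_nonneg (Real.rpow_nonneg hn _),
    abs_of_nonneg (Real.rpow_nonneg n.cast_add_one_pos.le _)]
  ring

lemma summable_factorial_rpow_mul_pow {k : ℝ} (hk : k < 1) (A : ℝ) :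
    Summable fun ℓ : ℕ => (ℓ ! : ℝ) ^ (k - 1) * A ^ ℓ := by
  have ratio_tendsto : Filter.Tendsto (fun n : ℕ => ((n : ℝ) + 1) ^ (k - 1) * |A|)
      Filter.atTop (nhds 0) := by
    have := (tendsto_rpow_neg_atTop (by linarith : 0 < 1 - k)).comp
      (Filter.tendsto_atTop_add_const_right _ 1 tendsto_natCast_atTop_atTop)
    simpa using this.mul_const |A|
  refine summable_of_ratio_norm_eventually_le (r := 1 / 2) (by norm_num) ?_
  filter_upwards [ratio_tendsto.eventually (ge_mem_nhds (by norm_num : (0 : ℝ) < 1 / 2))]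
    with n hn
  rw [norm_factorial_rpow_mul_pow_succ]
  exact mul_le_mul_of_nonneg_right hn (norm_nonneg _)

theorem stmt_2_general (α : ℕ → ℝ) (hα : ∀ j, 0 ≤ α j) (k : ℝ) (hk1 : k < 1)
    (hsum : Summable (fun j => (α j) ^ k)) :
    Summable (fun ℓ : ℕ =>
        (Nat.factorial ℓ : ℝ) ^ (k - 1) * (∑' j, (α j) ^ k) ^ ℓ) ∧
      ∀ s : ℕ, 1 ≤ s →
        ∑ u ∈ (Finset.range s).powerset,
            ((Nat.factorial u.card : ℝ) * ∏ j ∈ u, α j) ^ k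
          ≤ ∑' ℓ : ℕ,
              (Nat.factorial ℓ : ℝ) ^ (k - 1) * (∑' j, (α j) ^ k) ^ ℓ := by
  have hαk : ∀ j, 0 ≤ α j ^ k := fun j => Real.rpow_nonneg (hα j) k
  have hA : Summable fun ℓ : ℕ => (ℓ ! : ℝ) ^ (k - 1) * (∑' j, α j ^ k) ^ ℓ :=
    summable_factorial_rpow_mul_pow hk1 _
  refine ⟨hA, fun s _ => ?_⟩
  calc _ ≤ ∑ ℓ ∈ range (s + 1), (ℓ ! : ℝ) ^ (k - 1) * (∑ j ∈ range s, α j ^ k) ^ ℓ := by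
        simpa using sum_powerset_factorial_mul_prod_rpow_le (range s) (fun j _ => hα j) k
    _ ≤ ∑ ℓ ∈ range (s + 1), (ℓ ! : ℝ) ^ (k - 1) * (∑' j, α j ^ k) ^ ℓ := by
        gcongr
        · exact sum_nonneg fun j _ => hαk j
        · exact hsum.sum_le_tsum _ fun j _ => hαk j
    _ ≤ _ := hA.sum_le_tsum _ fun ℓ _ =>
        mul_nonneg (Real.rpow_nonneg (Nat.cast_nonneg _) _) (pow_nonneg (tsum_nonneg hαk) _)

theorem stmt_2 (α : ℕ → ℝ) (hα : ∀ j, 0 ≤ α j) (k : ℝ) (hk0 : 0 < k) (hk1 : k < 1)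
    (hsum : Summable (fun j => (α j) ^ k)) :
    Summable (fun ℓ : ℕ =>
        (Nat.factorial ℓ : ℝ) ^ (k - 1) * (∑' j, (α j) ^ k) ^ ℓ) ∧
      ∀ s : ℕ, 1 ≤ s →
        ∑ u ∈ (Finset.range s).powerset,
            ((Nat.factorial u.card : ℝ) * ∏ j ∈ u, α j) ^ k
          ≤ ∑' ℓ : ℕ,
              (Nat.factorial ℓ : ℝ) ^ (k - 1) * (∑' j, (α j) ^ k) ^ ℓ :=
  stmt_2_general α hα k hk1 hsum
end

section
/- Fix $s \ge 1$, $\lambda > 0$, and positive reals $\theta$ and $(c_u)_{\emptyset \ne u \subseteq \{1:s\}}$ with $c_u > 0$. Consider $F(\gamma) = \left(\sum_{\emptyset\ne u} \gamma_u^{\lambda}\, \theta^{|u|}\right)^{1/(2\lambda)} \left(\sum_{\emptyset \ne u} c_u^2/\gamma_u\right)^{1/2}$ over all choices of positive weights $\gamma = (\gamma_u)_{u}$. Then $F$ is minimized by taking $\gamma_u = \left(c_u\, \theta^{-|u|/2}\right)^{2/(1+\lambda)}$ (up to a common positive scaling factor, which leaves $F$ invariant). -/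
/-!
Hölder's inequality for the exponent triple `(1, 1/λ, 1/(1+λ))`, applied to
`f_i = γ_i^λ a_i` and `g_i = (b_i/γ_i)^λ`, gives
`∑ (a_i b_i^λ)^{1/(1+λ)} ≤ A^{1/(1+λ)} B^{λ/(1+λ)}` with `A = ∑ γ_i^λ a_i`, `B = ∑ b_i/γ_i`.
The left side does not depend on `γ`, and raising to the power `(1+λ)/(2λ)` turns the right side
into `F(γ)`. Equality holds when `a_i γ_i^{1+λ} = b_i`, which is what `γstar` satisfies for
`a_u = θ^{|u|}`, `b_u = c_u^2`.
-/

open Finset Real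

namespace WeightOptimization

variable {ι : Type*} (s : Finset ι) (lam : ℝ) (a b : ι → ℝ)

noncomputable def objective (γ : ι → ℝ) : ℝ :=
  (∑ i ∈ s, γ i ^ lam * a i) ^ (1 / (2 * lam)) * (∑ i ∈ s, b i / γ i) ^ ((1 : ℝ) / 2)

variable {s lam a b}

theorem objective_mul_left (hlam : lam ≠ 0) (ha : ∀ i ∈ s, 0 ≤ a i) (hb : ∀ i ∈ s, 0 ≤ b i)
    {γ : ι → ℝ} (hγ : ∀ i ∈ s, 0 ≤ γ i) {t : ℝ} (ht : 0 < t) :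
    objective s lam a b (fun i => t * γ i) = objective s lam a b γ := by
  have hA : ∑ i ∈ s, (t * γ i) ^ lam * a i = t ^ lam * ∑ i ∈ s, γ i ^ lam * a i := by
    rw [mul_sum]
    refine sum_congr rfl fun i hi => ?_
    rw [mul_rpow ht.le (hγ i hi), mul_assoc]
  have hB : ∑ i ∈ s, b i / (t * γ i) = t⁻¹ * ∑ i ∈ s, b i / γ i := by
    rw [mul_sum]
    exact sum_congr rfl fun i _ => by ring
  have hA_nonneg : 0 ≤ ∑ i ∈ s, γ i ^ lam * a i :=
    sum_nonneg fun i hi => mul_nonneg (rpow_nonneg (hγ i hi) _) (ha i hi)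
  have hB_nonneg : 0 ≤ ∑ i ∈ s, b i / γ i :=
    sum_nonneg fun i hi => div_nonneg (hb i hi) (hγ i hi)
  have ht_pos : 0 < t ^ ((1 : ℝ) / 2) := rpow_pos_of_pos ht _
  unfold objective
  rw [hA, hB, mul_rpow (rpow_nonneg ht.le _) hA_nonneg, mul_rpow (inv_nonneg.2 ht.le) hB_nonneg,
    ← rpow_mul ht.le, inv_rpow ht.le, show lam * (1 / (2 * lam)) = 1 / 2 by field_simp]
  field_simp

theorem sum_rpow_le_holder (hlam : 0 < lam) (ha : ∀ i ∈ s, 0 ≤ a i) (hb : ∀ i ∈ s, 0 ≤ b i)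
    {γ : ι → ℝ} (hγ : ∀ i ∈ s, 0 < γ i) :
    ∑ i ∈ s, (a i * b i ^ lam) ^ (1 + lam)⁻¹ ≤
      (∑ i ∈ s, γ i ^ lam * a i) ^ (1 + lam)⁻¹ * (∑ i ∈ s, b i / γ i) ^ (lam / (1 + lam)) := by
  have hpqr : HolderTriple 1 lam⁻¹ (1 + lam)⁻¹ :=
    ⟨by rw [inv_one, inv_inv, inv_inv], one_pos, inv_pos.2 hlam⟩
  have H := Lr_rpow_le_Lp_mul_Lq_of_nonneg s hpqr
    (f := fun i => γ i ^ lam * a i) (g := fun i => (b i / γ i) ^ lam)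
    (fun i hi => mul_nonneg (rpow_nonneg (hγ i hi).le _) (ha i hi))
    (fun i hi => rpow_nonneg (div_nonneg (hb i hi) (hγ i hi).le) _)
  have hfg : ∀ i ∈ s, (γ i ^ lam * a i * (b i / γ i) ^ lam) ^ (1 + lam)⁻¹ =
      (a i * b i ^ lam) ^ (1 + lam)⁻¹ := fun i hi => by
    have := rpow_pos_of_pos (hγ i hi) lam
    rw [div_rpow (hb i hi) (hγ i hi).le]
    field_simp
  have hg : ∀ i ∈ s, ((b i / γ i) ^ lam) ^ lam⁻¹ = b i / γ i := fun i hi =>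
    rpow_rpow_inv (div_nonneg (hb i hi) (hγ i hi).le) hlam.ne'
  simp only [rpow_one, div_one] at H
  rwa [sum_congr rfl hfg, sum_congr rfl hg, div_inv_eq_mul, inv_mul_eq_div] at H

theorem rpow_inv_eq_of_mul_rpow_eq (hp : 1 + lam ≠ 0) {x y z : ℝ} (hx : 0 ≤ x) (hy : 0 ≤ y)
    (hz : x * y ^ (1 + lam) = z) : (x * z ^ lam) ^ (1 + lam)⁻¹ = y ^ lam * x := by
  have : x * z ^ lam = (y ^ lam * x) ^ (1 + lam) := by
    rw [← hz, mul_rpow hx (rpow_nonneg hy _), ← rpow_mul hy, mul_rpow (rpow_nonneg hy _) hx,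
      ← rpow_mul hy, rpow_one_add' hx hp, mul_comm (1 + lam)]
    ring
  rw [this, rpow_rpow_inv (mul_nonneg (rpow_nonneg hy _) hx) hp]

theorem objective_le_of_mul_rpow_eq (hlam : 0 < lam) (ha : ∀ i ∈ s, 0 ≤ a i)
    {γ₀ : ι → ℝ} (hγ₀ : ∀ i ∈ s, 0 < γ₀ i) (hopt : ∀ i ∈ s, a i * γ₀ i ^ (1 + lam) = b i)
    {γ : ι → ℝ} (hγ : ∀ i ∈ s, 0 < γ i) :
    objective s lam a b γ₀ ≤ objective s lam a b γ := by
  set S := ∑ i ∈ s, γ₀ i ^ lam * a i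
  have hb : ∀ i ∈ s, 0 ≤ b i := fun i hi =>
    hopt i hi ▸ mul_nonneg (ha i hi) (rpow_nonneg (hγ₀ i hi).le _)
  have hS_nonneg : 0 ≤ S :=
    sum_nonneg fun i hi => mul_nonneg (rpow_nonneg (hγ₀ i hi).le _) (ha i hi)
  have hB₀ : ∑ i ∈ s, b i / γ₀ i = S := sum_congr rfl fun i hi => by
    rw [← hopt i hi, add_comm, rpow_add_one (hγ₀ i hi).ne']
    field_simp [(hγ₀ i hi).ne']
  have hS : ∑ i ∈ s, (a i * b i ^ lam) ^ (1 + lam)⁻¹ = S := sum_congr rfl fun i hi =>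
    rpow_inv_eq_of_mul_rpow_eq (by positivity) (ha i hi) (hγ₀ i hi).le (hopt i hi)
  have he : 0 ≤ (1 + lam) / (2 * lam) := by positivity
  calc objective s lam a b γ₀ = S ^ ((1 + lam) / (2 * lam)) := by
        rw [objective, hB₀, ← rpow_add' hS_nonneg (by positivity)]
        congr 1
        field_simp
    _ ≤ ((∑ i ∈ s, γ i ^ lam * a i) ^ (1 + lam)⁻¹ * (∑ i ∈ s, b i / γ i) ^ (lam / (1 + lam))) ^
          ((1 + lam) / (2 * lam)) :=
        rpow_le_rpow hS_nonneg (hS ▸ sum_rpow_le_holder hlam ha hb hγ) he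
    _ = objective s lam a b γ := by
        have hA : 0 ≤ ∑ i ∈ s, γ i ^ lam * a i :=
          sum_nonneg fun i hi => mul_nonneg (rpow_nonneg (hγ i hi).le _) (ha i hi)
        have hB : 0 ≤ ∑ i ∈ s, b i / γ i := sum_nonneg fun i hi => div_nonneg (hb i hi) (hγ i hi).le
        rw [mul_rpow (rpow_nonneg hA _) (rpow_nonneg hB _), ← rpow_mul hA, ← rpow_mul hB, objective]
        congr 2 <;> field_simp

end WeightOptimization

theorem pow_mul_rpow_eq_sq {c θ p : ℝ} (hc : 0 ≤ c) (hθ : 0 < θ) (hp : p ≠ 0) (k : ℕ) :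
    θ ^ k * ((c * θ ^ (-(k : ℝ) / 2)) ^ (2 / p)) ^ p = c ^ 2 := by
  have hx : 0 ≤ c * θ ^ (-(k : ℝ) / 2) := mul_nonneg hc (rpow_nonneg hθ.le _)
  rw [← rpow_mul hx, div_mul_cancel₀ _ hp, rpow_two, mul_pow, ← rpow_natCast (θ ^ _) 2,
    ← rpow_mul hθ.le, ← rpow_natCast θ k, mul_left_comm, ← rpow_add hθ]
  norm_num

theorem stmt_4_general (s : ℕ) (lam θ : ℝ) (hlam : 0 < lam) (hθ : 0 < θ)
    (c : Finset (Fin s) → ℝ) (hc : ∀ u : Finset (Fin s), u.Nonempty → 0 < c u) :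
    let F : (Finset (Fin s) → ℝ) → ℝ := fun γ =>
      (∑ u ∈ Finset.univ.filter (fun u : Finset (Fin s) => u.Nonempty),
          (γ u) ^ lam * θ ^ (u.card : ℕ)) ^ (1 / (2 * lam)) *
        (∑ u ∈ Finset.univ.filter (fun u : Finset (Fin s) => u.Nonempty),
          (c u) ^ 2 / γ u) ^ ((1 : ℝ) / 2)
    let γstar : Finset (Fin s) → ℝ := fun u =>
      (c u * θ ^ (-(u.card : ℝ) / 2)) ^ (2 / (1 + lam))
    (∀ γ : Finset (Fin s) → ℝ, (∀ u : Finset (Fin s), u.Nonempty → 0 < γ u) →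
        F γstar ≤ F γ) ∧
      ∀ γ : Finset (Fin s) → ℝ, (∀ u : Finset (Fin s), u.Nonempty → 0 < γ u) →
        ∀ t : ℝ, 0 < t → F (fun u => t * γ u) = F γ := by
  intro F γstar
  have hθpow : ∀ u ∈ univ.filter (fun u : Finset (Fin s) => u.Nonempty), 0 ≤ θ ^ u.card :=
    fun u _ => pow_nonneg hθ.le _
  have hopt : ∀ u ∈ univ.filter (fun u : Finset (Fin s) => u.Nonempty),
      θ ^ u.card * γstar u ^ (1 + lam) = c u ^ 2 := fun u hu =>
    pow_mul_rpow_eq_sq (hc u (mem_filter.1 hu).2).le hθ (by positivity) u.card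
  refine ⟨fun γ hγ => ?_, fun γ hγ t ht => ?_⟩
  · exact WeightOptimization.objective_le_of_mul_rpow_eq hlam hθpow
      (fun u hu => rpow_pos_of_pos (mul_pos (hc u (mem_filter.1 hu).2) (rpow_pos_of_pos hθ _)) _)
      hopt (fun u hu => hγ u (mem_filter.1 hu).2)
  · exact WeightOptimization.objective_mul_left hlam.ne' hθpow (fun u _ => sq_nonneg (c u))
      (fun u hu => (hγ u (mem_filter.1 hu).2).le) ht

/-- Weight optimization for randomly shifted lattice rules: the POD-type weights
`γ_u = (c_u θ^{-|u|/2})^{2/(1+λ)}` minimize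
`F(γ) = (∑_u γ_u^λ θ^{|u|})^{1/(2λ)} (∑_u c_u^2/γ_u)^{1/2}` over positive weights,
and `F` is invariant under positive scaling of the weights. -/
theorem stmt_4 (s : ℕ) (hs : 1 ≤ s) (lam θ : ℝ) (hlam : 0 < lam) (hθ : 0 < θ)
    (c : Finset (Fin s) → ℝ) (hc : ∀ u : Finset (Fin s), u.Nonempty → 0 < c u) :
    let F : (Finset (Fin s) → ℝ) → ℝ := fun γ =>
      (∑ u ∈ Finset.univ.filter (fun u : Finset (Fin s) => u.Nonempty),
          (γ u) ^ lam * θ ^ (u.card : ℕ)) ^ (1 / (2 * lam)) *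
        (∑ u ∈ Finset.univ.filter (fun u : Finset (Fin s) => u.Nonempty),
          (c u) ^ 2 / γ u) ^ ((1 : ℝ) / 2)
    let γstar : Finset (Fin s) → ℝ := fun u =>
      (c u * θ ^ (-(u.card : ℝ) / 2)) ^ (2 / (1 + lam))
    (∀ γ : Finset (Fin s) → ℝ, (∀ u : Finset (Fin s), u.Nonempty → 0 < γ u) →
        F γstar ≤ F γ) ∧
      ∀ γ : Finset (Fin s) → ℝ, (∀ u : Finset (Fin s), u.Nonempty → 0 < γ u) →
        ∀ t : ℝ, 0 < t → F (fun u => t * γ u) = F γ :=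
  stmt_4_general s lam θ hlam hθ c hc
end

section
/- Let $(b_j)_{j \ge 1}$ be nonnegative reals and suppose there exists $p_0 \in (0,1)$ with $\sum_{j\ge 1} b_j^{p_0} < \infty$. Let $\lambda$ satisfy $p_0/(2-p_0) \le \lambda < 1$ and set $k = 2\lambda/(1+\lambda)$ and $\theta > 0$. Define POD weights $\gamma_u = \left(|u|! \prod_{j\in u} (b_j/\sqrt{\theta})\right)^{2/(1+\lambda)}$ for finite sets $u \subset \mathbb{N}$. Then $\sup_{s \ge 1} \sum_{u \subseteq \{1,\dots,s\}} \gamma_u^{\lambda}\, \theta^{|u|} < \infty$ and $\sup_{s\ge 1}\sum_{u \subseteq \{1,\dots,s\}} \frac{(|u|!)^2 \prod_{j\in u} b_j^2}{\gamma_u} < \infty$. -/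
open Finset

lemma pow_add_bound (x y : ℝ) (hx : 0 ≤ x) (hy : 0 ≤ y) :
    ∀ m : ℕ, x ^ (m+1) + (m+1) * y * x ^ m ≤ (x + y) ^ (m+1) := by
  intro m
  induction m with
  | zero => simp
  | succ m ih =>
      have h2 : (x+y) * (x^(m+1) + ((m:ℝ)+1) * y * x^m) ≤ (x+y) * (x+y)^(m+1) :=
        mul_le_mul_of_nonneg_left ih (by positivity)
      have e : (x+y) * (x^(m+1) + ((m:ℝ)+1)*y*x^m)
          = x^(m+2) + (((m:ℝ)+1)+1)*y*x^(m+1) + ((m:ℝ)+1)*y^2*x^m := by ring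
      have hnn : 0 ≤ ((m:ℝ)+1)*y^2*x^m := by positivity
      have : x^(m+2) + (((m:ℝ)+1)+1)*y*x^(m+1) ≤ (x+y)^(m+2) := by
        rw [e] at h2
        calc x^(m+2) + (((m:ℝ)+1)+1)*y*x^(m+1)
            ≤ x^(m+2) + (((m:ℝ)+1)+1)*y*x^(m+1) + ((m:ℝ)+1)*y^2*x^m := by linarith
          _ ≤ (x+y) * (x+y)^(m+1) := h2
          _ = (x+y)^(m+2) := by ring
      push_cast
      convert this using 2 <;> push_cast <;> ring

lemma esymm_bound (c : ℕ → ℝ) (hc : ∀ j, 0 ≤ c j) :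
    ∀ (s ℓ : ℕ), (Nat.factorial ℓ : ℝ) *
      ∑ u ∈ (Finset.range s).powersetCard ℓ, ∏ j ∈ u, c j
      ≤ (∑ j ∈ Finset.range s, c j) ^ ℓ := by
  intro s
  induction s with
  | zero =>
      intro ℓ
      cases ℓ with
      | zero => simp
      | succ m =>
          have he : Finset.powersetCard (m+1) (∅:Finset ℕ) = ∅ := by simp
          simp [he]
  | succ s ih =>
      intro ℓ
      cases ℓ with
      | zero => simp
      | succ m =>
          have hnot : s ∉ Finset.range s := by simp
          have hins : Finset.range (s+1) = insert s (Finset.range s) := Finset.range_add_one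
          rw [hins, Finset.powersetCard_succ_insert hnot]
          have hdisj : Disjoint ((Finset.range s).powersetCard (m+1))
              (Finset.image (insert s) ((Finset.range s).powersetCard m)) := by
            rw [Finset.disjoint_left]
            intro u hu hu'
            obtain ⟨v, hv, rfl⟩ := Finset.mem_image.mp hu'
            have : s ∈ insert s v := Finset.mem_insert_self s v
            exact hnot (Finset.mem_of_subset (Finset.mem_powersetCard.mp hu).1 this)
          rw [Finset.sum_union hdisj]
          rw [Finset.sum_image (by
            intro u hu v hv huv
            have hsu : s ∉ u := fun h => hnot (Finset.mem_of_subset (Finset.mem_powersetCard.mp hu).1 h)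
            have hsv : s ∉ v := fun h => hnot (Finset.mem_of_subset (Finset.mem_powersetCard.mp hv).1 h)
            rw [← Finset.erase_insert hsu, ← Finset.erase_insert hsv, huv])]
          have hprod : ∀ u ∈ (Finset.range s).powersetCard m,
              ∏ j ∈ insert s u, c j = c s * ∏ j ∈ u, c j := by
            intro u hu
            refine Finset.prod_insert fun hsu =>
              hnot (Finset.mem_of_subset (Finset.mem_powersetCard.mp hu).1 hsu)
          rw [Finset.sum_congr rfl hprod, ← Finset.mul_sum, Finset.sum_insert hnot]
          have ihm := ih m
          have ihm1 := ih (m+1)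
          have hfac : (Nat.factorial (m+1) : ℝ) = ((m:ℝ)+1) * Nat.factorial m := by
            push_cast [Nat.factorial_succ]; ring
          have hcs := hc s
          have hS : 0 ≤ ∑ j ∈ Finset.range s, c j := Finset.sum_nonneg fun j _ => hc j
          have key := pow_add_bound (∑ j ∈ Finset.range s, c j) (c s) hS hcs m
          rw [add_comm (c s)]
          calc (Nat.factorial (m+1) : ℝ) *
                (∑ u ∈ (Finset.range s).powersetCard (m+1), ∏ j ∈ u, c j
                  + c s * ∑ u ∈ (Finset.range s).powersetCard m, ∏ j ∈ u, c j)
              = (Nat.factorial (m+1) : ℝ) * ∑ u ∈ (Finset.range s).powersetCard (m+1), ∏ j ∈ u, c j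
                + ((m:ℝ)+1) * c s * ((Nat.factorial m : ℝ) * ∑ u ∈ (Finset.range s).powersetCard m, ∏ j ∈ u, c j) := by
                  rw [hfac]; ring
            _ ≤ (∑ j ∈ Finset.range s, c j)^(m+1) + ((m:ℝ)+1) * c s * (∑ j ∈ Finset.range s, c j)^m := by
                  gcongr
            _ ≤ (∑ j ∈ Finset.range s, c j + c s)^(m+1) := key
open Finset Filter

lemma summable_fac (k T : ℝ) (hk : k < 1) (hT : 1 ≤ T) :
    Summable (fun ℓ : ℕ => (Nat.factorial ℓ : ℝ) ^ (k-1) * T ^ ℓ) := by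
  set f : ℕ → ℝ := fun ℓ => (Nat.factorial ℓ : ℝ) ^ (k-1) * T ^ ℓ with hf
  have hT0 : (0:ℝ) < T := lt_of_lt_of_le one_pos hT
  have hfn : ∀ n, 0 < f n := by
    intro n
    have h1 : (0:ℝ) < (Nat.factorial n : ℝ) := by positivity
    positivity
  have hratio : ∀ n : ℕ, ‖f (n+1)‖ / ‖f n‖ = ((n:ℝ)+1) ^ (k-1) * T := by
    intro n
    rw [Real.norm_of_nonneg (hfn _).le, Real.norm_of_nonneg (hfn _).le]
    have hfac : ((Nat.factorial (n+1):ℝ)) = ((n:ℝ)+1) * (Nat.factorial n) := by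
      push_cast [Nat.factorial_succ]; ring
    have h1 : (0:ℝ) < (Nat.factorial n : ℝ) := by positivity
    have h2 : (0:ℝ) < ((Nat.factorial n : ℝ)) ^ (k-1) := Real.rpow_pos_of_pos h1 _
    have h3 : (0:ℝ) < T ^ n := by positivity
    simp only [hf]
    rw [hfac, Real.mul_rpow (by positivity) h1.le, pow_succ]
    field_simp
  have htend : Tendsto (fun n : ℕ => ((n:ℝ)+1) ^ (k-1) * T) atTop (nhds 0) := by
    have h1 : Tendsto (fun n : ℕ => ((n:ℝ)+1)) atTop atTop :=
      tendsto_natCast_atTop_atTop.atTop_add tendsto_const_nhds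
    have h2 : Tendsto (fun x : ℝ => x ^ (k-1)) atTop (nhds 0) := by
      have := tendsto_rpow_neg_atTop (y := 1 - k) (by linarith)
      convert this using 2 with x
      ring_nf
    have := (h2.comp h1).mul_const T
    simpa using this
  apply summable_of_ratio_test_tendsto_lt_one (l := 0) one_pos
  · exact Filter.Eventually.of_forall fun n => (hfn n).ne'
  · exact (Filter.tendsto_congr hratio).mpr htend |>.congr fun n => (hratio n).symm ▸ rfl
open Finset Real

lemma key1 (lam θ Q : ℝ) (h0 : 0 < lam) (hθ : 0 < θ) (hQ : 0 < Q) (m : ℕ) :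
    ((Q / Real.sqrt θ ^ m) ^ (2/(1+lam))) ^ lam * θ ^ m
      = (Q * (θ ^ (1/(2*lam)) : ℝ) ^ m) ^ (2*lam/(1+lam)) := by
  have h1 : (0:ℝ) < 1 + lam := by linarith
  have hsq : (0:ℝ) < Real.sqrt θ ^ m := by positivity
  have hX : 0 < Q / Real.sqrt θ ^ m := div_pos hQ hsq
  have ht : (0:ℝ) < θ ^ (1/(2*lam)) := Real.rpow_pos_of_pos hθ _
  have htm : (0:ℝ) < (θ ^ (1/(2*lam)) : ℝ) ^ m := pow_pos ht m
  have hL : 0 < ((Q / Real.sqrt θ ^ m) ^ (2/(1+lam))) ^ lam * θ ^ m := by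
    have := Real.rpow_pos_of_pos (Real.rpow_pos_of_pos hX (2/(1+lam))) lam
    positivity
  have hR : 0 < (Q * (θ ^ (1/(2*lam)) : ℝ) ^ m) ^ (2*lam/(1+lam)) :=
    Real.rpow_pos_of_pos (by positivity) _
  apply Real.log_injOn_pos (Set.mem_Ioi.mpr hL) (Set.mem_Ioi.mpr hR)
  rw [Real.log_mul (by positivity) (by positivity),
      Real.log_rpow (Real.rpow_pos_of_pos hX _), Real.log_rpow hX,
      Real.log_div hQ.ne' hsq.ne', Real.log_pow, Real.log_sqrt hθ.le,
      Real.log_pow, Real.log_rpow (mul_pos hQ htm),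
      Real.log_mul hQ.ne' htm.ne']
  rw [Real.log_pow, Real.log_rpow hθ]
  field_simp
  ring

lemma key2 (lam θ Q : ℝ) (h0 : 0 < lam) (hθ : 0 < θ) (hQ : 0 < Q) (m : ℕ) :
    Q ^ 2 / ((Q / Real.sqrt θ ^ m) ^ (2/(1+lam)))
      = (Q * (θ ^ (1/(2*lam)) : ℝ) ^ m) ^ (2*lam/(1+lam)) := by
  have h1 : (0:ℝ) < 1 + lam := by linarith
  have hsq : (0:ℝ) < Real.sqrt θ ^ m := by positivity
  have hX : 0 < Q / Real.sqrt θ ^ m := div_pos hQ hsq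
  have ht : (0:ℝ) < θ ^ (1/(2*lam)) := Real.rpow_pos_of_pos hθ _
  have htm : (0:ℝ) < (θ ^ (1/(2*lam)) : ℝ) ^ m := pow_pos ht m
  have hXq : 0 < (Q / Real.sqrt θ ^ m) ^ (2/(1+lam)) := Real.rpow_pos_of_pos hX _
  have hL : 0 < Q ^ 2 / ((Q / Real.sqrt θ ^ m) ^ (2/(1+lam))) := by positivity
  have hR : 0 < (Q * (θ ^ (1/(2*lam)) : ℝ) ^ m) ^ (2*lam/(1+lam)) :=
    Real.rpow_pos_of_pos (by positivity) _
  apply Real.log_injOn_pos (Set.mem_Ioi.mpr hL) (Set.mem_Ioi.mpr hR)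
  rw [Real.log_div (by positivity) hXq.ne', Real.log_pow,
      Real.log_rpow hX, Real.log_div hQ.ne' hsq.ne', Real.log_pow,
      Real.log_sqrt hθ.le, Real.log_rpow (mul_pos hQ htm),
      Real.log_mul hQ.ne' htm.ne']
  rw [Real.log_pow, Real.log_rpow hθ]
  field_simp
  ring
open Finset Filter

lemma summable_rpow_of_le (a : ℕ → ℝ) (ha : ∀ j, 0 ≤ a j) (p k : ℝ) (hp : 0 < p)
    (hpk : p ≤ k) (hs : Summable (fun j => a j ^ p)) : Summable (fun j => a j ^ k) := by
  have hk0 : 0 < k := lt_of_lt_of_le hp hpk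
  have h0 : Tendsto (fun j => a j ^ p) atTop (nhds 0) := hs.tendsto_atTop_zero
  obtain ⟨N, hN⟩ := Filter.eventually_atTop.mp (h0.eventually_lt_const zero_lt_one)
  have hle1 : ∀ j, N ≤ j → a j ≤ 1 := by
    intro j hj
    by_contra h
    push_neg at h
    have : (1:ℝ) < a j ^ p := by
      calc (1:ℝ) = 1 ^ p := (Real.one_rpow p).symm
        _ < a j ^ p := Real.rpow_lt_rpow (by norm_num) h hp
    linarith [hN j hj]
  rw [← summable_nat_add_iff N]
  have hs' : Summable (fun n => a (n + N) ^ p) := (summable_nat_add_iff N).mpr hs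
  refine Summable.of_nonneg_of_le (fun n => Real.rpow_nonneg (ha _) _) (fun n => ?_) hs'
  rcases eq_or_lt_of_le (ha (n + N)) with h | h
  · rw [← h, Real.zero_rpow hk0.ne', Real.zero_rpow hp.ne']
  · exact Real.rpow_le_rpow_of_exponent_ge h (hle1 _ (Nat.le_add_left N n)) hpk

open Finset




open Finset

/-- With the POD weights `γ_u = (|u|! ∏_{j∈u} b_j/√θ)^{2/(1+λ)}` and
`p₀/(2-p₀) ≤ λ < 1`, both sums appearing in the QMC error bound are bounded
uniformly in the dimension `s`. -/
theorem stmt_10 (b : ℕ → ℝ) (hb : ∀ j, 0 ≤ b j) (p₀ : ℝ) (hp0 : 0 < p₀)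
    (hp1 : p₀ < 1) (hsum : Summable (fun j => (b j) ^ p₀))
    (lam : ℝ) (hlam1 : p₀ / (2 - p₀) ≤ lam) (hlam2 : lam < 1)
    (θ : ℝ) (hθ : 0 < θ) :
    let γ : Finset ℕ → ℝ := fun u =>
      ((Nat.factorial u.card : ℝ) * ∏ j ∈ u, (b j / Real.sqrt θ)) ^ (2 / (1 + lam))
    (∃ C₁ : ℝ, ∀ s : ℕ, 1 ≤ s →
        ∑ u ∈ (Finset.range s).powerset, (γ u) ^ lam * θ ^ (u.card : ℕ) ≤ C₁) ∧
      ∃ C₂ : ℝ, ∀ s : ℕ, 1 ≤ s →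
        ∑ u ∈ (Finset.range s).powerset,
            ((Nat.factorial u.card : ℝ) ^ 2 * ∏ j ∈ u, (b j) ^ 2) / γ u ≤ C₂ := by
  intro γ
  have h2p : (0:ℝ) < 2 - p₀ := by linarith
  have hlam0 : (0:ℝ) < lam := lt_of_lt_of_le (div_pos hp0 h2p) hlam1
  have h1l : (0:ℝ) < 1 + lam := by linarith
  set k := 2*lam/(1+lam) with hkdef
  have hk0 : 0 < k := by positivity
  have hk1 : k < 1 := by rw [hkdef, div_lt_one h1l]; linarith
  have hpk : p₀ ≤ k := by
    rw [hkdef, le_div_iff₀ h1l]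
    have h := (div_le_iff₀ h2p).mp hlam1
    nlinarith
  set t := θ ^ (1/(2*lam)) with htdef
  have ht0 : 0 < t := Real.rpow_pos_of_pos hθ _
  set a : ℕ → ℝ := fun j => b j * t with hadef
  have ha0 : ∀ j, 0 ≤ a j := fun j => mul_nonneg (hb j) ht0.le
  have hsa : Summable (fun j => a j ^ p₀) := by
    have he : (fun j => a j ^ p₀) = fun j => b j ^ p₀ * t ^ p₀ := by
      funext j; exact Real.mul_rpow (hb j) ht0.le
    rw [he]; exact hsum.mul_right _
  have hsk : Summable (fun j => a j ^ k) := summable_rpow_of_le a ha0 p₀ k hp0 hpk hsa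
  set T := (∑' j, a j ^ k) + 1 with hTdef
  have hT1 : 1 ≤ T :=
    le_add_of_nonneg_left (tsum_nonneg fun j => Real.rpow_nonneg (ha0 j) _)
  have hg := summable_fac k T hk1 hT1
  set C := ∑' ℓ : ℕ, (Nat.factorial ℓ : ℝ) ^ (k-1) * T ^ ℓ with hCdef
  -- master bound
  have master : ∀ s : ℕ,
      ∑ u ∈ (Finset.range s).powerset,
        ((Nat.factorial u.card : ℝ) * ∏ j ∈ u, a j) ^ k ≤ C := by
    intro s
    rw [Finset.sum_powerset, Finset.card_range]
    have step1 : ∀ ℓ ∈ Finset.range (s+1),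
        ∑ u ∈ (Finset.range s).powersetCard ℓ,
          ((Nat.factorial u.card : ℝ) * ∏ j ∈ u, a j) ^ k
        ≤ (Nat.factorial ℓ : ℝ) ^ (k-1) * T ^ ℓ := by
      intro ℓ _
      have hrw : ∀ u ∈ (Finset.range s).powersetCard ℓ,
          ((Nat.factorial u.card : ℝ) * ∏ j ∈ u, a j) ^ k
            = (Nat.factorial ℓ : ℝ) ^ k * ∏ j ∈ u, a j ^ k := by
        intro u hu
        rw [(Finset.mem_powersetCard.mp hu).2]
        rw [Real.mul_rpow (by positivity) (Finset.prod_nonneg fun j _ => ha0 j),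
          Real.finset_prod_rpow u a (fun j _ => ha0 j)]
      rw [Finset.sum_congr rfl hrw, ← Finset.mul_sum]
      have hfacpos : (0:ℝ) < (Nat.factorial ℓ : ℝ) := by positivity
      have hsplit : (Nat.factorial ℓ : ℝ) ^ k
          = (Nat.factorial ℓ : ℝ) ^ (k-1) * (Nat.factorial ℓ : ℝ) := by
        nth_rewrite 3 [← Real.rpow_one (Nat.factorial ℓ : ℝ)]
        rw [← Real.rpow_add hfacpos]
        norm_num
      rw [hsplit, mul_assoc]
      have hes := esymm_bound (fun j => a j ^ k) (fun j => Real.rpow_nonneg (ha0 j) _) s ℓ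
      have hsumT : ∑ j ∈ Finset.range s, a j ^ k ≤ T := by
        rw [hTdef]
        have := Summable.sum_le_tsum (Finset.range s)
          (fun j _ => Real.rpow_nonneg (ha0 j) k) hsk
        linarith
      have hpowT : (∑ j ∈ Finset.range s, a j ^ k) ^ ℓ ≤ T ^ ℓ :=
        pow_le_pow_left₀ (Finset.sum_nonneg fun j _ => Real.rpow_nonneg (ha0 j) _) hsumT ℓ
      have hfac1 : (0:ℝ) ≤ (Nat.factorial ℓ : ℝ) ^ (k-1) := Real.rpow_nonneg hfacpos.le _
      calc (Nat.factorial ℓ : ℝ) ^ (k-1) *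
              ((Nat.factorial ℓ : ℝ) * ∑ u ∈ (Finset.range s).powersetCard ℓ, ∏ j ∈ u, a j ^ k)
          ≤ (Nat.factorial ℓ : ℝ) ^ (k-1) * (∑ j ∈ Finset.range s, a j ^ k) ^ ℓ :=
            mul_le_mul_of_nonneg_left hes hfac1
        _ ≤ (Nat.factorial ℓ : ℝ) ^ (k-1) * T ^ ℓ :=
            mul_le_mul_of_nonneg_left hpowT hfac1
    calc ∑ ℓ ∈ Finset.range (s+1), ∑ u ∈ (Finset.range s).powersetCard ℓ,
            ((Nat.factorial u.card : ℝ) * ∏ j ∈ u, a j) ^ k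
        ≤ ∑ ℓ ∈ Finset.range (s+1), (Nat.factorial ℓ : ℝ) ^ (k-1) * T ^ ℓ :=
          Finset.sum_le_sum step1
      _ ≤ C := Summable.sum_le_tsum _ (fun ℓ _ => by positivity) hg
  -- term rewrites
  have hγeq : ∀ u : Finset ℕ, γ u
      = (((Nat.factorial u.card : ℝ) * ∏ j ∈ u, b j) / Real.sqrt θ ^ u.card) ^ (2/(1+lam)) := by
    intro u
    show ((Nat.factorial u.card : ℝ) * ∏ j ∈ u, (b j / Real.sqrt θ)) ^ (2 / (1 + lam)) = _
    rw [Finset.prod_div_distrib, Finset.prod_const, mul_div_assoc]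
  have hprodA : ∀ u : Finset ℕ, ∏ j ∈ u, a j = (∏ j ∈ u, b j) * t ^ u.card := by
    intro u
    rw [hadef]
    rw [Finset.prod_mul_distrib, Finset.prod_const]
  have hterm1 : ∀ u : Finset ℕ, (γ u) ^ lam * θ ^ (u.card : ℕ)
      = ((Nat.factorial u.card : ℝ) * ∏ j ∈ u, a j) ^ k := by
    intro u
    rcases eq_or_lt_of_le (Finset.prod_nonneg fun j (_ : j ∈ u) => hb j) with hP | hP
    · rw [hγeq u, hprodA u, ← hP]
      simp [Real.zero_rpow (by positivity : (2/(1+lam)) ≠ 0), Real.zero_rpow hlam0.ne',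
        Real.zero_rpow hk0.ne']
    · have hQ : (0:ℝ) < (Nat.factorial u.card : ℝ) * ∏ j ∈ u, b j := by positivity
      rw [hγeq u, hprodA u, htdef]
      rw [key1 lam θ _ hlam0 hθ hQ u.card]
      rw [hkdef, mul_assoc]
  have hterm2 : ∀ u : Finset ℕ,
      ((Nat.factorial u.card : ℝ) ^ 2 * ∏ j ∈ u, (b j) ^ 2) / γ u
      = ((Nat.factorial u.card : ℝ) * ∏ j ∈ u, a j) ^ k := by
    intro u
    have hnum : ((Nat.factorial u.card : ℝ) ^ 2 * ∏ j ∈ u, (b j) ^ 2)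
        = ((Nat.factorial u.card : ℝ) * ∏ j ∈ u, b j) ^ 2 := by
      rw [Finset.prod_pow, mul_pow]
    rcases eq_or_lt_of_le (Finset.prod_nonneg fun j (_ : j ∈ u) => hb j) with hP | hP
    · rw [hγeq u, hprodA u, hnum, ← hP]
      simp [Real.zero_rpow hk0.ne']
    · have hQ : (0:ℝ) < (Nat.factorial u.card : ℝ) * ∏ j ∈ u, b j := by positivity
      rw [hγeq u, hprodA u, hnum, htdef]
      rw [key2 lam θ _ hlam0 hθ hQ u.card]
      rw [hkdef, mul_assoc]
  constructor
  · exact ⟨C, fun s _ => by rw [Finset.sum_congr rfl fun u _ => hterm1 u]; exact master s⟩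
  · exact ⟨C, fun s _ => by rw [Finset.sum_congr rfl fun u _ => hterm2 u]; exact master s⟩
end
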